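/- Equivalent deformations of a Leibniz algebra L over the same base have the same differential: if λ₁ ≅ λ₂ are deformations with local base (A, 𝔐) and π: A → A/𝔐² is the quotient map, then dλ₁ = dλ₂ as maps TA = (𝔐/𝔐²)′ → HL²(L;L). -/
import Mathlib


open TensorProduct

noncomputable def reduceTensor {K A L : Type*} [Field K] [CommRing A] [Algebra K A]
    [AddCommGroup L] [Module K L] (ξ : A →ₗ[K] K) :
    A ⊗[K] L →ₗ[K] L :=
  (TensorProduct.lid K L).toLinearMap.comp (TensorProduct.map ξ LinearMap.id)

noncomputable def alphaCochain {K A L : Type*} [Field K] [CommRing A] [Algebra K A]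
    [AddCommGroup L] [Module K L] (ξ : A →ₗ[K] K)
    (br : A ⊗[K] L → A ⊗[K] L → A ⊗[K] L) (l₁ l₂ : L) : L :=
  reduceTensor ξ (br ((1 : A) ⊗ₜ[K] l₁) ((1 : A) ⊗ₜ[K] l₂))

section Aux

variable {K A L : Type*} [Field K] [CommRing A] [Algebra K A]
  [AddCommGroup L] [Module K L]

lemma reduceTensor_tmul (ξ : A →ₗ[K] K) (a : A) (l : L) :
    reduceTensor ξ (a ⊗ₜ[K] l) = ξ a • l := by
  simp [reduceTensor]

lemma xi_mul (ε : A →ₐ[K] K) (ξ : A →ₗ[K] K) (hξ1 : ξ 1 = 0)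
    (hξ2 : ∀ a b : A, ε a = 0 → ε b = 0 → ξ (a * b) = 0) (a b : A) :
    ξ (a * b) = ε a * ξ b + ξ a * ε b := by
  have h := hξ2 (a - algebraMap K A (ε a)) (b - algebraMap K A (ε b))
    (by simp) (by simp)
  have expand : (a - algebraMap K A (ε a)) * (b - algebraMap K A (ε b))
      = a * b - ε b • a - ε a • b + (ε a * ε b) • (1 : A) := by
    simp only [Algebra.smul_def, map_mul, map_one, mul_one]
    ring
  rw [expand] at h
  simp only [map_add, map_sub, map_smul, hξ1, smul_eq_mul, mul_zero] at h
  linear_combination h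

lemma reduce_smul (ε : A →ₐ[K] K) (ξ : A →ₗ[K] K) (hξ1 : ξ 1 = 0)
    (hξ2 : ∀ a b : A, ε a = 0 → ε b = 0 → ξ (a * b) = 0) (a : A) (z : A ⊗[K] L) :
    reduceTensor ξ (a • z)
      = ε a • reduceTensor ξ z + ξ a • reduceTensor ε.toLinearMap z := by
  induction z using TensorProduct.induction_on with
  | zero => simp
  | tmul b l =>
      rw [smul_tmul', smul_eq_mul, reduceTensor_tmul, reduceTensor_tmul, reduceTensor_tmul,
        xi_mul ε ξ hξ1 hξ2, AlgHom.toLinearMap_apply, add_smul, mul_smul, mul_smul]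
  | add x y hx hy =>
      rw [smul_add, map_add, hx, hy, map_add, map_add, smul_add, smul_add]
      abel

lemma reduce_eps_smul (ε : A →ₐ[K] K) (a : A) (z : A ⊗[K] L) :
    reduceTensor ε.toLinearMap (a • z) = ε a • reduceTensor ε.toLinearMap z := by
  induction z using TensorProduct.induction_on with
  | zero => simp
  | tmul b l =>
      rw [smul_tmul', smul_eq_mul, reduceTensor_tmul, reduceTensor_tmul,
        AlgHom.toLinearMap_apply, AlgHom.toLinearMap_apply, map_mul, mul_smul]
  | add x y hx hy =>
      rw [smul_add, map_add, hx, hy, map_add, smul_add]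

-- general formula for ξ applied to a bracket
lemma xi_br (ε : A →ₐ[K] K) (ξ : A →ₗ[K] K) (hξ1 : ξ 1 = 0)
    (hξ2 : ∀ a b : A, ε a = 0 → ε b = 0 → ξ (a * b) = 0)
    (bll : L → L → L)
    (h_add_left : ∀ x y z : L, bll (x + y) z = bll x z + bll y z)
    (h_add_right : ∀ x y z : L, bll x (y + z) = bll x y + bll x z)
    (h_smul_left : ∀ (c : K) (x y : L), bll (c • x) y = c • bll x y)
    (h_smul_right : ∀ (c : K) (x y : L), bll x (c • y) = c • bll x y)
    (br : A ⊗[K] L → A ⊗[K] L → A ⊗[K] L)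
    (hadd_l : ∀ x y z, br (x + y) z = br x z + br y z)
    (hadd_r : ∀ x y z, br x (y + z) = br x y + br x z)
    (hsmul_l : ∀ (a : A) x y, br (a • x) y = a • br x y)
    (hsmul_r : ∀ (a : A) x y, br x (a • y) = a • br x y)
    (hcompat : ∀ x y, reduceTensor ε.toLinearMap (br x y)
        = bll (reduceTensor ε.toLinearMap x) (reduceTensor ε.toLinearMap y))
    (x y : A ⊗[K] L) :
    reduceTensor ξ (br x y)
      = alphaCochain ξ br (reduceTensor ε.toLinearMap x) (reduceTensor ε.toLinearMap y)
        + bll (reduceTensor ε.toLinearMap x) (reduceTensor ξ y)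
        + bll (reduceTensor ξ x) (reduceTensor ε.toLinearMap y) := by
  have hbll0l : ∀ z : L, bll 0 z = 0 := fun z => by
    simpa using h_smul_left 0 0 z
  have hbll0r : ∀ z : L, bll z 0 = 0 := fun z => by
    simpa using h_smul_right 0 z 0
  have hbr0l : ∀ y, br 0 y = 0 := fun y => by
    simpa using hsmul_l 0 0 y
  have hbr0r : ∀ x, br x 0 = 0 := fun x => by
    simpa using hsmul_r 0 x 0
  simp only [alphaCochain]
  have hα0l : ∀ l : L, reduceTensor ξ (br ((1:A) ⊗ₜ[K] (0:L)) ((1:A) ⊗ₜ[K] l)) = 0 := by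
    intro l; rw [tmul_zero, hbr0l, map_zero]
  have hα0r : ∀ l : L, reduceTensor ξ (br ((1:A) ⊗ₜ[K] l) ((1:A) ⊗ₜ[K] (0:L))) = 0 := by
    intro l; rw [tmul_zero, hbr0r, map_zero]
  have hαaddl : ∀ l l' m : L,
      reduceTensor ξ (br ((1:A) ⊗ₜ[K] (l + l')) ((1:A) ⊗ₜ[K] m))
        = reduceTensor ξ (br ((1:A) ⊗ₜ[K] l) ((1:A) ⊗ₜ[K] m))
          + reduceTensor ξ (br ((1:A) ⊗ₜ[K] l') ((1:A) ⊗ₜ[K] m)) := by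
    intro l l' m; rw [tmul_add, hadd_l, map_add]
  have hξalg : ∀ c : K, ξ (algebraMap K A c) = 0 := by
    intro c
    rw [Algebra.algebraMap_eq_smul_one, map_smul, hξ1, smul_zero]
  have hsmaux : ∀ (c : K) (z : A ⊗[K] L), reduceTensor ξ (algebraMap K A c • z)
      = c • reduceTensor ξ z := by
    intro c z
    rw [reduce_smul ε ξ hξ1 hξ2, hξalg, AlgHom.commutes, zero_smul, add_zero]
    simp
  have htmulsm : ∀ (c : K) (l : L),
      (1 : A) ⊗ₜ[K] (c • l) = algebraMap K A c • ((1:A) ⊗ₜ[K] l) := by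
    intro c l
    rw [tmul_smul, algebraMap_smul]
  have hαsml : ∀ (c : K) (l m : L),
      reduceTensor ξ (br ((1:A) ⊗ₜ[K] (c • l)) ((1:A) ⊗ₜ[K] m))
        = c • reduceTensor ξ (br ((1:A) ⊗ₜ[K] l) ((1:A) ⊗ₜ[K] m)) := by
    intro c l m
    rw [htmulsm, hsmul_l, hsmaux]
  have hαsmr : ∀ (c : K) (l m : L),
      reduceTensor ξ (br ((1:A) ⊗ₜ[K] l) ((1:A) ⊗ₜ[K] (c • m)))
        = c • reduceTensor ξ (br ((1:A) ⊗ₜ[K] l) ((1:A) ⊗ₜ[K] m)) := by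
    intro c l m
    rw [htmulsm, hsmul_r, hsmaux]
  -- the case x = 1 ⊗ l
  have key1 : ∀ (l : L) (y : A ⊗[K] L),
      reduceTensor ξ (br ((1:A) ⊗ₜ[K] l) y)
        = reduceTensor ξ (br ((1:A) ⊗ₜ[K] l) ((1:A) ⊗ₜ[K] (reduceTensor ε.toLinearMap y)))
          + bll l (reduceTensor ξ y) := by
    intro l y
    induction y using TensorProduct.induction_on with
    | zero => simp [hbr0r, hα0r, hbll0r]
    | tmul b m =>
        have hb : (b ⊗ₜ[K] m : A ⊗[K] L) = b • ((1:A) ⊗ₜ[K] m) := by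
          rw [smul_tmul', smul_eq_mul, mul_one]
        rw [hb]
        simp only [hsmul_r, reduce_smul ε ξ hξ1 hξ2, reduce_eps_smul ε, hcompat,
          reduceTensor_tmul, AlgHom.toLinearMap_apply, map_one, one_smul, hξ1,
          zero_smul, zero_add, add_zero, smul_zero]
        rw [hαsmr, h_smul_right]
    | add y₁ y₂ h1 h2 =>
        rw [hadd_r, map_add, h1, h2, map_add, map_add, tmul_add, hadd_r, map_add, h_add_right]
        abel
  -- general x by induction
  induction x using TensorProduct.induction_on with
  | zero => simp [hbr0l, hα0l, hbll0l]
  | tmul a l =>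
      have ha : (a ⊗ₜ[K] l : A ⊗[K] L) = a • ((1:A) ⊗ₜ[K] l) := by
        rw [smul_tmul', smul_eq_mul, mul_one]
      rw [ha, hsmul_l, reduce_smul ε ξ hξ1 hξ2, key1, hcompat]
      simp only [reduce_eps_smul ε, reduce_smul ε ξ hξ1 hξ2, reduceTensor_tmul,
        AlgHom.toLinearMap_apply, map_one, one_smul, hξ1, zero_smul, zero_add, add_zero, smul_zero]
      rw [h_smul_left, smul_add, hαsml, h_smul_left]
  | add x₁ x₂ h1 h2 =>
      rw [hadd_l, map_add, h1, h2, map_add, map_add, tmul_add, hadd_l, map_add,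
        h_add_left, h_add_left]
      abel

end Aux
/-- Equivalent deformations with local base `(A, 𝔐)` have the same
differential `dλ : TA = (𝔐/𝔐²)′ → HL²(L;L)`: for every functional
`ξ` on `A` vanishing at `1` and on `𝔐²` (i.e. every element of `(𝔐/𝔐²)′`),
the cocycles representing `dλ₁(ξ)` and `dλ₂(ξ)` are cohomologous. -/
theorem equivalent_deformations_same_differential {K A L : Type*} [Field K]
    [CommRing A] [Algebra K A] [IsLocalRing A]
    [AddCommGroup L] [Module K L]
    (bll : L → L → L)
    (h_add_left : ∀ x y z : L, bll (x + y) z = bll x z + bll y z)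
    (h_add_right : ∀ x y z : L, bll x (y + z) = bll x y + bll x z)
    (h_smul_left : ∀ (c : K) (x y : L), bll (c • x) y = c • bll x y)
    (h_smul_right : ∀ (c : K) (x y : L), bll x (c • y) = c • bll x y)
    (h_leibniz : ∀ x y z : L, bll x (bll y z) = bll (bll x y) z - bll (bll x z) y)
    (ε : A →ₐ[K] K)
    -- dim A/𝔐² < ∞
    (hfd : FiniteDimensional K (A ⧸ (RingHom.ker ε.toRingHom) ^ 2))
    (br₁ br₂ : A ⊗[K] L → A ⊗[K] L → A ⊗[K] L)
    (hbr₁_add_left : ∀ x y z, br₁ (x + y) z = br₁ x z + br₁ y z)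
    (hbr₁_add_right : ∀ x y z, br₁ x (y + z) = br₁ x y + br₁ x z)
    (hbr₁_smul_left : ∀ (a : A) x y, br₁ (a • x) y = a • br₁ x y)
    (hbr₁_smul_right : ∀ (a : A) x y, br₁ x (a • y) = a • br₁ x y)
    (hbr₁_leibniz : ∀ x y z, br₁ x (br₁ y z) = br₁ (br₁ x y) z - br₁ (br₁ x z) y)
    (hcompat₁ : ∀ x y,
      reduceTensor ε.toLinearMap (br₁ x y)
        = bll (reduceTensor ε.toLinearMap x) (reduceTensor ε.toLinearMap y))
    (hbr₂_add_left : ∀ x y z, br₂ (x + y) z = br₂ x z + br₂ y z)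
    (hbr₂_add_right : ∀ x y z, br₂ x (y + z) = br₂ x y + br₂ x z)
    (hbr₂_smul_left : ∀ (a : A) x y, br₂ (a • x) y = a • br₂ x y)
    (hbr₂_smul_right : ∀ (a : A) x y, br₂ x (a • y) = a • br₂ x y)
    (hbr₂_leibniz : ∀ x y z, br₂ x (br₂ y z) = br₂ (br₂ x y) z - br₂ (br₂ x z) y)
    (hcompat₂ : ∀ x y,
      reduceTensor ε.toLinearMap (br₂ x y)
        = bll (reduceTensor ε.toLinearMap x) (reduceTensor ε.toLinearMap y))
    -- λ₁ ≅ λ₂ : the deformations are equivalent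
    (hequiv : ∃ Φ : (A ⊗[K] L) ≃ₗ[A] (A ⊗[K] L),
        (∀ x, reduceTensor ε.toLinearMap (Φ x) = reduceTensor ε.toLinearMap x)
        ∧ ∀ x y, Φ (br₁ x y) = br₂ (Φ x) (Φ y)) :
    -- then dλ₁ = dλ₂ : for every ξ ∈ (𝔐/𝔐²)′ the two cocycles are cohomologous
    ∀ ξ : A →ₗ[K] K, ξ 1 = 0 → (∀ a b : A, ε a = 0 → ε b = 0 → ξ (a * b) = 0) →
      ∃ g : L →ₗ[K] L, ∀ l₁ l₂ : L,
        alphaCochain ξ br₁ l₁ l₂ - alphaCochain ξ br₂ l₁ l₂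
          = bll l₁ (g l₂) + bll (g l₁) l₂ - g (bll l₁ l₂) := by
  intro ξ hξ1 hξ2
  obtain ⟨Φ, hΦe, hΦbr⟩ := hequiv
  let gL : L →ₗ[K] L :=
    (reduceTensor ξ).comp ((Φ.toLinearMap.restrictScalars K).comp (TensorProduct.mk K A L 1))
  have hgL : ∀ l : L, reduceTensor ξ (Φ ((1:A) ⊗ₜ[K] l)) = gL l := fun l => rfl
  have hstar : ∀ x : A ⊗[K] L,
      reduceTensor ξ (Φ x) = gL (reduceTensor ε.toLinearMap x) + reduceTensor ξ x := by
    intro x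
    induction x using TensorProduct.induction_on with
    | zero => simp
    | tmul a l =>
        have ha : (a ⊗ₜ[K] l : A ⊗[K] L) = a • ((1:A) ⊗ₜ[K] l) := by
          rw [smul_tmul', smul_eq_mul, mul_one]
        rw [ha, map_smul, reduce_smul ε ξ hξ1 hξ2, hΦe, reduce_eps_smul ε,
          reduce_smul ε ξ hξ1 hξ2]
        simp only [reduceTensor_tmul, AlgHom.toLinearMap_apply, map_one, one_smul, hξ1,
          zero_smul, add_zero, zero_add, smul_zero, map_smul, hgL]
    | add x y hx hy =>
        rw [map_add, map_add, hx, hy, map_add, map_add, map_add]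
        abel
  refine ⟨gL, fun l₁ l₂ => ?_⟩
  have e1 : reduceTensor ε.toLinearMap ((1:A) ⊗ₜ[K] l₁) = l₁ := by
    rw [reduceTensor_tmul]; simp
  have e2 : reduceTensor ε.toLinearMap ((1:A) ⊗ₜ[K] l₂) = l₂ := by
    rw [reduceTensor_tmul]; simp
  have hA := hstar (br₁ ((1:A) ⊗ₜ[K] l₁) ((1:A) ⊗ₜ[K] l₂))
  rw [hcompat₁, e1, e2] at hA
  have hB : reduceTensor ξ (Φ (br₁ ((1:A) ⊗ₜ[K] l₁) ((1:A) ⊗ₜ[K] l₂)))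
      = reduceTensor ξ (br₂ ((1:A) ⊗ₜ[K] l₁) ((1:A) ⊗ₜ[K] l₂))
        + bll l₁ (gL l₂) + bll (gL l₁) l₂ := by
    rw [hΦbr,
      xi_br ε ξ hξ1 hξ2 bll h_add_left h_add_right h_smul_left h_smul_right br₂
        hbr₂_add_left hbr₂_add_right hbr₂_smul_left hbr₂_smul_right hcompat₂,
      hΦe, hΦe, e1, e2, hgL, hgL]
    simp only [alphaCochain]
  have hC := hA.symm.trans hB
  simp only [alphaCochain]
  calc reduceTensor ξ (br₁ ((1:A) ⊗ₜ[K] l₁) ((1:A) ⊗ₜ[K] l₂))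
        - reduceTensor ξ (br₂ ((1:A) ⊗ₜ[K] l₁) ((1:A) ⊗ₜ[K] l₂))
      = (gL (bll l₁ l₂) + reduceTensor ξ (br₁ ((1:A) ⊗ₜ[K] l₁) ((1:A) ⊗ₜ[K] l₂)))
          - gL (bll l₁ l₂)
          - reduceTensor ξ (br₂ ((1:A) ⊗ₜ[K] l₁) ((1:A) ⊗ₜ[K] l₂)) := by abel
    _ = (reduceTensor ξ (br₂ ((1:A) ⊗ₜ[K] l₁) ((1:A) ⊗ₜ[K] l₂))
          + bll l₁ (gL l₂) + bll (gL l₁) l₂)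
          - gL (bll l₁ l₂)
          - reduceTensor ξ (br₂ ((1:A) ⊗ₜ[K] l₁) ((1:A) ⊗ₜ[K] l₂)) := by rw [hC]
    _ = bll l₁ (gL l₂) + bll (gL l₁) l₂ - gL (bll l₁ l₂) := by abel
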